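/- Let y ∈ ℝ³ with 0 ≤ ‖y‖ < 1, k̂ a unit vector with y = ‖y‖k̂, and suppose T = t k̂k̂ᵗ and x ∈ ℝ³ arbitrary; set m = T − xyᵗ and M = mᵗm. Then the function f(n̂) = 4 n̂ᵗMn̂/(1 − (y·n̂)²)² over unit vectors n̂ attains its maximum at n̂ = k̂ (provided t ≠ ‖y‖(x·k̂) or x ≠ 0 appropriately making M ≠ 0 and M k̂ proportional to its top eigenvector). -/

import Mathlib

open Matrix Complex Kronecker
open scoped ComplexOrder

noncomputable section

def pauli (i : Fin 3) : Matrix (Fin 2) (Fin 2) ℂ :=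
  if i = 0 then !![0, 1; 1, 0]
  else if i = 1 then !![0, -I; I, 0]
  else !![1, 0; 0, -1]

def dotsigma (x : Fin 3 → ℝ) : Matrix (Fin 2) (Fin 2) ℂ :=
  ∑ i, (x i : ℂ) • pauli i

def dot3 (x y : Fin 3 → ℝ) : ℝ := ∑ i, x i * y i

def norm3 (x : Fin 3 → ℝ) : ℝ := Real.sqrt (∑ i, (x i) ^ 2)

def trB (A : Matrix (Fin 2 × Fin 2) (Fin 2 × Fin 2) ℂ) : Matrix (Fin 2) (Fin 2) ℂ :=
  Matrix.of fun i j => ∑ k, A (i, k) (j, k)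

def trA (A : Matrix (Fin 2 × Fin 2) (Fin 2 × Fin 2) ℂ) : Matrix (Fin 2) (Fin 2) ℂ :=
  Matrix.of fun i j => ∑ k, A (k, i) (k, j)

/-! With `u = t k̂ - c x` the matrix `m` is the rank-one `u k̂ᵗ`, so `n̂ᵗ M n̂ = |m n̂|² = |u|² (k̂·n̂)²`
and, writing `s = (k̂·n̂)² ∈ [0, 1]`, the objective is `4 |u|² s / (1 - c² s)²`. This is
increasing in `s`, so it is largest at `s = 1`, which `n̂ = k̂` attains. -/

theorem dot3_eq_dotProduct (x y : Fin 3 → ℝ) : dot3 x y = x ⬝ᵥ y := rfl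

section DotProduct

variable {ι R : Type*}

theorem smul_vecMulVec_sub_vecMulVec_smul [CommRing R] (t c : R) (k x : ι → R) :
    t • vecMulVec k k - vecMulVec x (c • k) = vecMulVec (t • k - c • x) k := by
  ext i j
  simp only [Matrix.sub_apply, Matrix.smul_apply, vecMulVec_apply, Pi.sub_apply, Pi.smul_apply,
    smul_eq_mul]
  ring

variable [Fintype ι]

theorem sq_dotProduct_le_dotProduct_self_mul (u v : ι → ℝ) :
    (u ⬝ᵥ v) ^ 2 ≤ (u ⬝ᵥ u) * (v ⬝ᵥ v) := by
  simpa only [dotProduct, sq] using Finset.sum_mul_sq_le_sq_mul_sq Finset.univ u v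

theorem dotProduct_transpose_mul_self_vecMulVec_mulVec [CommRing R] (u k n : ι → R) :
    n ⬝ᵥ ((vecMulVec u k)ᵀ * vecMulVec u k) *ᵥ n = (u ⬝ᵥ u) * (k ⬝ᵥ n) ^ 2 := by
  rw [← mulVec_mulVec, dotProduct_mulVec, vecMul_transpose, vecMulVec_mulVec]
  simp only [op_smul_eq_smul, smul_dotProduct, dotProduct_smul, smul_eq_mul]
  ring

end DotProduct

theorem monotoneOn_div_one_sub_mul_sq {q : ℝ} (hq₀ : -1 ≤ q) (hq₁ : q < 1) :
    MonotoneOn (fun s => s / (1 - q * s) ^ 2) (Set.Icc 0 1) := by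
  rintro s ⟨hs₀, hs₁⟩ s' ⟨hs'₀, hs'₁⟩ hss'
  have hd : 0 < 1 - q * s := by nlinarith
  have hd' : 0 < 1 - q * s' := by nlinarith
  rw [div_le_div_iff₀ (by positivity) (by positivity)]
  -- `s' (1 - q s)² - s (1 - q s')² = (s' - s) (1 - q² s s')`
  have hqq : q ^ 2 * (s * s') ≤ 1 :=
    mul_le_one₀ (by nlinarith) (mul_nonneg hs₀ hs'₀) (mul_le_one₀ hs₁ hs'₀ hs'₁)
  nlinarith [mul_nonneg (sub_nonneg.2 hss') (sub_nonneg.2 hqq)]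

theorem stmt15_general (x k : Fin 3 → ℝ) (hk : dot3 k k = 1) (t c : ℝ)
    (hc0 : 0 ≤ c) (hc1 : c < 1)
    (m M : Matrix (Fin 3) (Fin 3) ℝ)
    (hm : m = t • vecMulVec k k - vecMulVec x (c • k))
    (hM : M = mᵀ * m) :
    IsGreatest {v : ℝ | ∃ n : Fin 3 → ℝ, dot3 n n = 1 ∧
        v = 4 * dot3 n (M.mulVec n) / (1 - (dot3 (c • k) n) ^ 2) ^ 2}
      (4 * dot3 k (M.mulVec k) / (1 - (dot3 (c • k) k) ^ 2) ^ 2) := by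
  rw [smul_vecMulVec_sub_vecMulVec_smul] at hm
  subst hm hM
  set u := t • k - c • x
  have hobj : ∀ n, 4 * dot3 n (((vecMulVec u k)ᵀ * vecMulVec u k) *ᵥ n) /
      (1 - dot3 (c • k) n ^ 2) ^ 2 =
      4 * (u ⬝ᵥ u) * ((k ⬝ᵥ n) ^ 2 / (1 - c ^ 2 * (k ⬝ᵥ n) ^ 2) ^ 2) := fun n => by
    rw [dot3_eq_dotProduct, dot3_eq_dotProduct, dotProduct_transpose_mul_self_vecMulVec_mulVec,
      smul_dotProduct, smul_eq_mul]
    ring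
  refine ⟨⟨k, hk, rfl⟩, ?_⟩
  rintro _ ⟨n, hn, rfl⟩
  rw [dot3_eq_dotProduct] at hk hn
  have hkn : (k ⬝ᵥ n) ^ 2 ≤ 1 := by
    simpa [hk, hn] using sq_dotProduct_le_dotProduct_self_mul k n
  rw [hobj, hobj, hk, one_pow]
  exact mul_le_mul_of_nonneg_left
    (monotoneOn_div_one_sub_mul_sq (by linarith [sq_nonneg c]) (by nlinarith) ⟨sq_nonneg _, hkn⟩
      ⟨zero_le_one, le_rfl⟩ hkn)
    (mul_nonneg zero_le_four (by simpa using dotProduct_star_self_nonneg u))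

theorem stmt15 (x k : Fin 3 → ℝ) (hk : dot3 k k = 1) (t c : ℝ)
    (hc0 : 0 ≤ c) (hc1 : c < 1)
    (hne : ∃ i, t * k i - c * x i ≠ 0)
    (m M : Matrix (Fin 3) (Fin 3) ℝ)
    (hm : m = t • vecMulVec k k - vecMulVec x (c • k))
    (hM : M = mᵀ * m) :
    IsGreatest {v : ℝ | ∃ n : Fin 3 → ℝ, dot3 n n = 1 ∧
        v = 4 * dot3 n (M.mulVec n) / (1 - (dot3 (c • k) n) ^ 2) ^ 2}
      (4 * dot3 k (M.mulVec k) / (1 - (dot3 (c • k) k) ^ 2) ^ 2) :=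
  stmt15_general x k hk t c hc0 hc1 m M hm hM
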